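/- arXiv:1309.1305 — 2 statements merged into one kernel-verified Lean document; each statement's English description precedes it below -/
import Mathlib

section
/- For every unit flow Φ from A to B and every bounded nonnegative measurable function f on Ω×Ω, the flow dominates the expected edge occupation of the associated Markov chain up to its hitting time of B: ∫_{Ω×Ω} f(x,y) Φ(dx,dy) ≥ E^Φ[ Σ_{n=1}^{τ_B^Y} f(Y_{n−1},Y_n) ], where the sum is Σ_{n≥1} f(Y_{n−1},Y_n) 1{τ_B^Y ≥ n}. -/
open MeasureTheory ProbabilityTheory ENNReal Set Filter
open scoped Classical

noncomputable section

variable {Ω : Type*}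

/-- The Dirichlet form `E(h) = (1/2) ∫ (h(y)-h(x))² K(dx,dy)` (in `ℝ≥0∞`). -/
def dirichletForm [MeasurableSpace Ω] (K : Measure (Ω × Ω)) (h : Ω → ℝ) : ℝ≥0∞ :=
  2⁻¹ * ∫⁻ p, ENNReal.ofReal ((h p.2 - h p.1) ^ 2) ∂K

/-- The class `V_AB` of test potentials. -/
def VAB [MeasurableSpace Ω] (A B : Set Ω) (K : Measure (Ω × Ω)) : Set (Ω → ℝ) :=
  {h | Measurable h ∧ (∀ x ∈ A, h x = 1) ∧ (∀ x ∈ B, h x = 0) ∧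
    (∀ x, 0 ≤ h x ∧ h x ≤ 1) ∧ dirichletForm K h < ⊤}

/-- The capacity `Cap(A,B)`, defined by the Dirichlet principle. -/
def Cap [MeasurableSpace Ω] (A B : Set Ω) (K : Measure (Ω × Ω)) : ℝ≥0∞ :=
  ⨅ h ∈ VAB A B K, dirichletForm K h

/-- Finite paths `(γ₀, …, γ_{n+1})` with at least one edge. -/
abbrev PathSpace (Ω : Type*) := Σ n : ℕ, Fin (n + 2) → Ω

/-- The set `Γ_AB` of finite paths from `A` to `B` not touching `B` before the end. -/
def GammaAB (A B : Set Ω) : Set (PathSpace Ω) :=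
  {γ | γ.2 0 ∈ A ∧ γ.2 (Fin.last (γ.1 + 1)) ∈ B ∧
    ∀ i : Fin (γ.1 + 2), 0 < (i : ℕ) → (i : ℕ) < γ.1 + 1 → γ.2 i ∉ B}

/-- Sum of `g` over the (directed) edges of the path `γ`. -/
def pathSum (g : Ω × Ω → ℝ≥0∞) (γ : PathSpace Ω) : ℝ≥0∞ :=
  ∑ j : Fin (γ.1 + 1), g (γ.2 j.castSucc, γ.2 j.succ)

/-- `Φ` is the edge measure `Φ_P` of the path measure `P`. -/
def IsEdgeMeasure [MeasurableSpace Ω] (P : Measure (PathSpace Ω)) (Φ : Measure (Ω × Ω)) : Prop :=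
  ∀ g : Ω × Ω → ℝ≥0∞, Measurable g → ∫⁻ p, g p ∂Φ = ∫⁻ γ, pathSum g γ ∂P

/-- `Φ` is a unit flow from `A` to `B`. -/
def IsUnitFlow [MeasurableSpace Ω] (A B : Set Ω) (Φ : Measure (Ω × Ω)) : Prop :=
  SigmaFinite Φ ∧
  Φ (A ×ˢ univ) = 1 ∧ Φ (univ ×ˢ A) = 0 ∧
  Φ (univ ×ˢ B) = 1 ∧ Φ (B ×ˢ univ) = 0 ∧
  (∀ C : Set Ω, MeasurableSet C → C ⊆ (A ∪ B)ᶜ → Φ (C ×ˢ univ) = Φ (univ ×ˢ C)) ∧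
  ∃ χ : Set (Ω × Ω), MeasurableSet χ ∧ Φ χᶜ = 0 ∧ ∀ x y : Ω, (x, y) ∈ χ → (y, x) ∉ χ

/-- `χ` contains no loops. -/
def NoLoops (χ : Set (Ω × Ω)) : Prop :=
  ∀ (n : ℕ) (γ : Fin (n + 2) → Ω), γ (Fin.last (n + 1)) = γ 0 →
    ∃ j : Fin (n + 1), (γ j.castSucc, γ j.succ) ∉ χ

/-- `Φ` is a loop-free unit flow from `A` to `B`. -/
def IsLoopFreeUnitFlow [MeasurableSpace Ω] (A B : Set Ω) (Φ : Measure (Ω × Ω)) : Prop :=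
  IsUnitFlow A B Φ ∧
  ∃ χ : Set (Ω × Ω), MeasurableSet χ ∧ Φ χᶜ = 0 ∧
    (∀ x y : Ω, (x, y) ∈ χ → (y, x) ∉ χ) ∧ NoLoops χ

/-- `Φ(dx,dy) = ν(dx) ℓ(x,dy)` with `ν = Φ.fst` the left marginal. -/
def Disintegrates [MeasurableSpace Ω] (Φ : Measure (Ω × Ω)) (ℓ : Kernel Ω Ω) : Prop :=
  ∀ g : Ω × Ω → ℝ≥0∞, Measurable g →
    ∫⁻ p, g p ∂Φ = ∫⁻ x, ∫⁻ y, g (x, y) ∂(ℓ x) ∂Φ.fst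

/-- Finite-dimensional distributions of the Markov chain with initial law `μ0` and kernel `ℓ`. -/
def fdd [MeasurableSpace Ω] (μ0 : Measure Ω) (ℓ : Kernel Ω Ω) :
    (n : ℕ) → Measure (Fin (n + 1) → Ω)
  | 0 => μ0.map (fun x => fun _ => x)
  | n + 1 => (fdd μ0 ℓ n).bind (fun p => (ℓ (p (Fin.last n))).map (Fin.snoc p))

/-- `P` is the law of the Markov chain with initial law `μ0` and transition kernel `ℓ`. -/
def IsChainLaw [MeasurableSpace Ω] (μ0 : Measure Ω) (ℓ : Kernel Ω Ω)
    (P : Measure (ℕ → Ω)) : Prop :=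
  IsProbabilityMeasure P ∧
  ∀ n : ℕ, P.map (fun ω (i : Fin (n + 1)) => ω (i : ℕ)) = fdd μ0 ℓ n

/-- `Σ_{n=1}^{τ_B} g(Y_{n-1}, Y_n)`, where `τ_B = min{n ≥ 1 : Y_n ∈ B}`. -/
def stoppedSum (B : Set Ω) (g : Ω × Ω → ℝ≥0∞) (ω : ℕ → Ω) : ℝ≥0∞ :=
  ∑' n : ℕ, if ∀ m, 1 ≤ m → m ≤ n → ω m ∉ B then g (ω n, ω (n + 1)) else 0

/-- The event `τ_B < ∞`. -/
def HitsB (B : Set Ω) (ω : ℕ → Ω) : Prop := ∃ n : ℕ, 1 ≤ n ∧ ω n ∈ B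

/-- `τ_B`, viewed in `ℝ≥0∞`. -/
def hitTimeE (B : Set Ω) (ω : ℕ → Ω) : ℝ≥0∞ :=
  ∑' n : ℕ, if ∀ m, 1 ≤ m → m ≤ n → ω m ∉ B then 1 else 0

/-- The Berman-Konsowa functional `E^Φ[ (Σ_{n=1}^{τ_B} g(Y_{n-1},Y_n))⁻¹ ]`, with the
reciprocal taken to be `0` on `{τ_B = ∞}` (and automatically `0` when the sum is infinite). -/
def bkValue [MeasurableSpace Ω] (B : Set Ω) (g : Ω × Ω → ℝ≥0∞)
    (P : Measure (ℕ → Ω)) : ℝ≥0∞ :=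
  ∫⁻ ω, (if HitsB B ω then (stoppedSum B g ω)⁻¹ else 0) ∂P

end

/-!
Let `ρₙ` be the law of `Yₙ` on the event `{Y₁, …, Yₙ ∉ B}`, i.e. the occupation measure of the
chain killed on entering `B`: `ρ₀ = ν|_A` and `ρₙ₊₁ = (ρₙ ℓ)|_{Bᶜ}`. By the Markov property the
`n`-th term of the stopped sum has expectation `∫ ρₙ(dx) ℓ(x,dy) f(x,y)`, so the left-hand side
equals `∫ (∑ₙ ρₙ)(dx) ℓ(x,dy) f(x,y)`. Since `νℓ` is the right marginal of `Φ`, conservation of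
the flow together with `Φ(Ω × A) = 0` gives `(νℓ)|_{Bᶜ} ≤ ν|_{Aᶜ}`, and induction on `n` yields
`∑_{k<n+1} ρₖ = ν|_A + ((∑_{k<n} ρₖ) ℓ)|_{Bᶜ} ≤ ν|_A + ν|_{Aᶜ} = ν`. Hence the left-hand side
is at most `∫ ν(dx) ℓ(x,dy) f(x,y) = ∫ f dΦ`.
-/

section

variable {Ω : Type*}

def avoidingPaths (B : Set Ω) (n : ℕ) : Set (Fin (n + 1) → Ω) :=
  {p | ∀ i, i ≠ 0 → p i ∉ B}

lemma snoc_mem_avoidingPaths {B : Set Ω} {n : ℕ} {p : Fin (n + 1) → Ω} {y : Ω} :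
    Fin.snoc (α := fun _ => Ω) p y ∈ avoidingPaths B (n + 1) ↔ p ∈ avoidingPaths B n ∧ y ∉ B := by
  simp [avoidingPaths, Fin.forall_fin_succ']

lemma prefix_mem_avoidingPaths_iff {B : Set Ω} {n : ℕ} {ω : ℕ → Ω} :
    (fun i : Fin (n + 1) => ω i) ∈ avoidingPaths B n ↔ ∀ m, 1 ≤ m → m ≤ n → ω m ∉ B := by
  refine ⟨fun h m hm hmn => h ⟨m, by omega⟩ (Fin.ne_of_val_ne (by simp; omega)),
    fun h i hi => h i (Nat.one_le_iff_ne_zero.2 (Fin.val_ne_zero_iff.2 hi))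
      (Nat.lt_succ_iff.1 i.2)⟩

lemma stoppedSum_eq_tsum_indicator (B : Set Ω) (g : Ω × Ω → ℝ≥0∞) (ω : ℕ → Ω) :
    stoppedSum B g ω = ∑' n, (avoidingPaths B n).indicator
      (fun p => g (p (Fin.last n), ω (n + 1))) (fun i => ω i) := by
  refine tsum_congr fun n => ?_
  simp only [Set.indicator_apply, prefix_mem_avoidingPaths_iff, Fin.val_last]
  congr

end

lemma MeasureTheory.Measure.comp_mono {α β : Type*} [MeasurableSpace α] [MeasurableSpace β]
    (κ : Kernel α β) {μ ν : Measure α} (h : μ ≤ ν) : κ ∘ₘ μ ≤ κ ∘ₘ ν :=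
  Measure.le_iff.2 fun s hs => by
    rw [Measure.bind_apply hs κ.aemeasurable, Measure.bind_apply hs κ.aemeasurable]
    exact lintegral_mono' h le_rfl

lemma MeasureTheory.Measure.restrict_comp_finsetSum {α β ι : Type*} [MeasurableSpace α] [MeasurableSpace β]
    (κ : Kernel α β) (μ : ι → Measure α) (s : Finset ι) {C : Set β} (hC : MeasurableSet C) :
    (κ ∘ₘ ∑ i ∈ s, μ i).restrict C = ∑ i ∈ s, (κ ∘ₘ μ i).restrict C := by
  ext t ht
  simp only [Measure.finsetSum_apply, Measure.restrict_apply ht,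
    Measure.bind_apply (ht.inter hC) κ.aemeasurable, lintegral_finsetSum_measure]

section

variable {Ω : Type*} [MeasurableSpace Ω]

lemma measurableSet_avoidingPaths {B : Set Ω} (hB : MeasurableSet B) (n : ℕ) :
    MeasurableSet (avoidingPaths B n) := by
  simp only [avoidingPaths, Set.ofPred_forall]
  exact .iInter fun i => .iInter fun _ => hB.compl.preimage (measurable_pi_apply i)

lemma measurable_snoc_uncurry {n : ℕ} :
    Measurable fun q : (Fin (n + 1) → Ω) × Ω => (Fin.snoc q.1 q.2 : Fin (n + 2) → Ω) := by
  refine measurable_pi_lambda _ fun i => Fin.lastCases ?_ (fun j => ?_) i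
  · simpa using measurable_snd
  · simp only [Fin.snoc_castSucc]
    fun_prop

lemma measurable_snoc {n : ℕ} (p : Fin (n + 1) → Ω) :
    Measurable (Fin.snoc (α := fun _ => Ω) p) :=
  measurable_snoc_uncurry.comp measurable_prodMk_left

lemma measurable_map_snoc (ℓ : Kernel Ω Ω) [IsSFiniteKernel ℓ] {n : ℕ} :
    Measurable fun p : Fin (n + 1) → Ω =>
      (ℓ (p (Fin.last n))).map (Fin.snoc (α := fun _ => Ω) p) := by
  refine Measure.measurable_of_measurable_coe _ fun s hs => ?_
  simp_rw [Measure.map_apply (measurable_snoc _) hs]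
  exact (ℓ.comap _ (measurable_pi_apply (Fin.last n))).measurable_kernel_prodMk_left
    (measurable_snoc_uncurry hs)

lemma lintegral_fdd_zero (μ₀ : Measure Ω) (ℓ : Kernel Ω Ω) {F : (Fin 1 → Ω) → ℝ≥0∞}
    (hF : Measurable F) : ∫⁻ p, F p ∂fdd μ₀ ℓ 0 = ∫⁻ x, F (fun _ => x) ∂μ₀ :=
  lintegral_map hF (measurable_pi_lambda _ fun _ => measurable_id)

lemma lintegral_fdd_succ (μ₀ : Measure Ω) (ℓ : Kernel Ω Ω) [IsSFiniteKernel ℓ] (n : ℕ)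
    {F : (Fin (n + 2) → Ω) → ℝ≥0∞} (hF : Measurable F) :
    ∫⁻ p, F p ∂fdd μ₀ ℓ (n + 1)
      = ∫⁻ p, ∫⁻ y, F (Fin.snoc p y) ∂ℓ (p (Fin.last n)) ∂fdd μ₀ ℓ n := by
  rw [fdd, Measure.lintegral_bind (measurable_map_snoc ℓ).aemeasurable hF.aemeasurable]
  exact lintegral_congr fun p => lintegral_map hF (measurable_snoc p)

lemma measurable_prefix (n : ℕ) : Measurable fun (ω : ℕ → Ω) (i : Fin (n + 1)) => ω i :=
  measurable_pi_lambda _ fun _ => measurable_pi_apply _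

lemma IsChainLaw.lintegral_prefix_next {μ₀ : Measure Ω} {ℓ : Kernel Ω Ω} [IsSFiniteKernel ℓ]
    {P : Measure (ℕ → Ω)} (hP : IsChainLaw μ₀ ℓ P) (n : ℕ)
    {G : (Fin (n + 1) → Ω) → Ω → ℝ≥0∞} (hG : Measurable (Function.uncurry G)) :
    ∫⁻ ω, G (fun i => ω i) (ω (n + 1)) ∂P
      = ∫⁻ p, ∫⁻ y, G p y ∂ℓ (p (Fin.last n)) ∂fdd μ₀ ℓ n := by
  have hinit : Measurable (Fin.init (α := fun _ => Ω) (n := n + 1)) :=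
    measurable_pi_lambda _ fun i => measurable_pi_apply _
  have hF : Measurable fun q : Fin (n + 2) → Ω => G (Fin.init q) (q (Fin.last (n + 1))) :=
    hG.comp (hinit.prodMk (measurable_pi_apply _))
  calc ∫⁻ ω, G (fun i => ω i) (ω (n + 1)) ∂P
      = ∫⁻ q, G (Fin.init q) (q (Fin.last (n + 1))) ∂fdd μ₀ ℓ (n + 1) := by
        rw [← hP.2 (n + 1), lintegral_map hF (measurable_prefix (n + 1))]
        rfl
    _ = _ := by
        rw [lintegral_fdd_succ μ₀ ℓ n hF]
        simp only [Fin.init_snoc, Fin.snoc_last]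

noncomputable def killedOccupation (B : Set Ω) (μ₀ : Measure Ω) (ℓ : Kernel Ω Ω) :
    ℕ → Measure Ω
  | 0 => μ₀
  | n + 1 => (ℓ ∘ₘ killedOccupation B μ₀ ℓ n).restrict Bᶜ

lemma setLIntegral_avoidingPaths_fdd (μ₀ : Measure Ω) (ℓ : Kernel Ω Ω) [IsSFiniteKernel ℓ]
    {B : Set Ω} (hB : MeasurableSet B) (n : ℕ) {h : Ω → ℝ≥0∞} (hh : Measurable h) :
    ∫⁻ p in avoidingPaths B n, h (p (Fin.last n)) ∂fdd μ₀ ℓ n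
      = ∫⁻ x, h x ∂killedOccupation B μ₀ ℓ n := by
  induction n generalizing h with
  | zero =>
    have hall : avoidingPaths B 0 = univ :=
      eq_univ_of_forall fun p i hi => absurd (Fin.fin_one_eq_zero i) hi
    rw [hall, Measure.restrict_univ,
      lintegral_fdd_zero μ₀ ℓ (F := fun p => h (p (Fin.last 0))) (hh.comp (measurable_pi_apply _))]
    rfl
  | succ n ih =>
    have hF : Measurable ((avoidingPaths B (n + 1)).indicator fun q => h (q (Fin.last (n + 1)))) :=
      (hh.comp (measurable_pi_apply _)).indicator (measurableSet_avoidingPaths hB _)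
    have hkill : Measurable fun x => ∫⁻ y, Bᶜ.indicator h y ∂ℓ x :=
      (hh.indicator hB.compl).lintegral_kernel
    have hstep (p : Fin (n + 1) → Ω) :
        ∫⁻ y, (avoidingPaths B (n + 1)).indicator (fun q => h (q (Fin.last (n + 1))))
          (Fin.snoc p y) ∂ℓ (p (Fin.last n))
        = (avoidingPaths B n).indicator
            (fun p => ∫⁻ y, Bᶜ.indicator h y ∂ℓ (p (Fin.last n))) p := by
      by_cases hp : p ∈ avoidingPaths B n <;>
        simp [Set.indicator_apply, snoc_mem_avoidingPaths, hp]
    rw [← lintegral_indicator (measurableSet_avoidingPaths hB _), lintegral_fdd_succ μ₀ ℓ n hF]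
    simp_rw [hstep]
    rw [lintegral_indicator (measurableSet_avoidingPaths hB _), ih hkill, killedOccupation,
      ← lintegral_indicator hB.compl,
      Measure.lintegral_bind ℓ.aemeasurable (hh.indicator hB.compl).aemeasurable]

lemma measurable_indicator_avoidingPaths_edge {B : Set Ω} (hB : MeasurableSet B)
    {g : Ω × Ω → ℝ≥0∞} (hg : Measurable g) (n : ℕ) :
    Measurable (Function.uncurry fun (p : Fin (n + 1) → Ω) (y : Ω) =>
      (avoidingPaths B n).indicator (fun p => g (p (Fin.last n), y)) p) :=
  (hg.comp ((measurable_pi_apply _).comp measurable_fst |>.prodMk measurable_snd)).indicator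
    (measurable_fst (measurableSet_avoidingPaths hB n))

lemma IsChainLaw.lintegral_indicator_avoidingPaths_edge {μ₀ : Measure Ω} {ℓ : Kernel Ω Ω}
    [IsSFiniteKernel ℓ] {P : Measure (ℕ → Ω)} (hP : IsChainLaw μ₀ ℓ P) {B : Set Ω}
    (hB : MeasurableSet B) {g : Ω × Ω → ℝ≥0∞} (hg : Measurable g) (n : ℕ) :
    ∫⁻ ω, (avoidingPaths B n).indicator (fun p => g (p (Fin.last n), ω (n + 1))) (fun i => ω i) ∂P
      = ∫⁻ x, ∫⁻ y, g (x, y) ∂ℓ x ∂killedOccupation B μ₀ ℓ n := by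
  rw [hP.lintegral_prefix_next n (measurable_indicator_avoidingPaths_edge hB hg n),
    ← setLIntegral_avoidingPaths_fdd μ₀ ℓ hB n hg.lintegral_kernel_prod_right',
    ← lintegral_indicator (measurableSet_avoidingPaths hB n)]
  refine lintegral_congr fun p => ?_
  by_cases hp : p ∈ avoidingPaths B n <;> simp [hp]

lemma Disintegrates.comp_fst_eq_snd {Φ : Measure (Ω × Ω)} {ℓ : Kernel Ω Ω}
    (hdis : Disintegrates Φ ℓ) : ℓ ∘ₘ Φ.fst = Φ.snd := by
  ext s hs
  have h := hdis ((Prod.snd ⁻¹' s).indicator 1) (measurable_one.indicator (measurable_snd hs))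
  rw [lintegral_indicator_one (measurable_snd hs)] at h
  rw [Measure.bind_apply hs ℓ.aemeasurable, Measure.snd_apply hs, h]
  exact lintegral_congr fun x => (lintegral_indicator_one hs).symm

lemma snd_restrict_compl_le_fst_restrict_compl {Φ : Measure (Ω × Ω)} {A B : Set Ω}
    (hA : MeasurableSet A) (hB : MeasurableSet B) (hΦA : Φ (univ ×ˢ A) = 0)
    (hcons : ∀ C : Set Ω, MeasurableSet C → C ⊆ (A ∪ B)ᶜ → Φ (C ×ˢ univ) = Φ (univ ×ˢ C)) :
    Φ.snd.restrict Bᶜ ≤ Φ.fst.restrict Aᶜ := by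
  refine Measure.le_iff.2 fun C hC => ?_
  have hD : MeasurableSet ((C ∩ Bᶜ) \ A) := (hC.inter hB.compl).diff hA
  rw [Measure.restrict_apply hC, Measure.restrict_apply hC]
  calc Φ.snd (C ∩ Bᶜ)
      = Φ.snd ((C ∩ Bᶜ) \ A) := by
        rw [measure_sdiff_null (by rwa [Measure.snd_apply hA, ← Set.univ_prod])]
    _ = Φ.fst ((C ∩ Bᶜ) \ A) := by
        rw [Measure.fst_apply hD, Measure.snd_apply hD, ← Set.prod_univ, ← Set.univ_prod]
        exact (hcons _ hD fun x hx => by simp_all).symm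
    _ ≤ Φ.fst (C ∩ Aᶜ) := measure_mono fun x hx => ⟨hx.1.1, hx.2⟩

lemma sum_range_killedOccupation_le {ν : Measure Ω} {ℓ : Kernel Ω Ω} {A B : Set Ω}
    (hA : MeasurableSet A) (hB : MeasurableSet B)
    (hflow : (ℓ ∘ₘ ν).restrict Bᶜ ≤ ν.restrict Aᶜ) (n : ℕ) :
    ∑ k ∈ Finset.range n, killedOccupation B (ν.restrict A) ℓ k ≤ ν := by
  induction n with
  | zero => simpa using Measure.zero_le ν
  | succ n ih =>
    calc ∑ k ∈ Finset.range (n + 1), killedOccupation B (ν.restrict A) ℓ k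
        = (ℓ ∘ₘ ∑ k ∈ Finset.range n, killedOccupation B (ν.restrict A) ℓ k).restrict Bᶜ
            + ν.restrict A := by
          rw [Finset.sum_range_succ', Measure.restrict_comp_finsetSum _ _ _ hB.compl]
          rfl
      _ ≤ (ℓ ∘ₘ ν).restrict Bᶜ + ν.restrict A := by
          gcongr
          exact Measure.comp_mono ℓ ih
      _ ≤ ν.restrict Aᶜ + ν.restrict A := by gcongr
      _ = ν := Measure.restrict_compl_add_restrict hA

lemma sum_killedOccupation_le {ν : Measure Ω} {ℓ : Kernel Ω Ω} {A B : Set Ω}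
    (hA : MeasurableSet A) (hB : MeasurableSet B)
    (hflow : (ℓ ∘ₘ ν).restrict Bᶜ ≤ ν.restrict Aᶜ) :
    Measure.sum (killedOccupation B (ν.restrict A) ℓ) ≤ ν :=
  Measure.le_iff.2 fun s hs => by
    rw [Measure.sum_apply _ hs, ENNReal.tsum_eq_iSup_nat]
    exact iSup_le fun n => by
      rw [← Measure.finsetSum_apply]
      exact sum_range_killedOccupation_le hA hB hflow n s

end

theorem unitFlow_dominates_edge_occupation_general
    {Ω : Type*} [MeasurableSpace Ω]
    (A B : Set Ω) (hA : MeasurableSet A) (hB : MeasurableSet B)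
    (Φ : Measure (Ω × Ω)) (hΦ : IsUnitFlow A B Φ)
    (ℓ : Kernel Ω Ω) (hℓ : IsMarkovKernel ℓ) (hdis : Disintegrates Φ ℓ)
    (P : Measure (ℕ → Ω)) (hP : IsChainLaw (Φ.fst.restrict A) ℓ P)
    (g : Ω × Ω → ℝ≥0∞) (hg : Measurable g) :
    ∫⁻ ω, stoppedSum B g ω ∂P ≤ ∫⁻ p, g p ∂Φ := by
  obtain ⟨-, -, hΦA, -, -, hcons, -⟩ := hΦ
  have hflow : (ℓ ∘ₘ Φ.fst).restrict Bᶜ ≤ Φ.fst.restrict Aᶜ := by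
    rw [hdis.comp_fst_eq_snd]
    exact snd_restrict_compl_le_fst_restrict_compl hA hB hΦA hcons
  calc ∫⁻ ω, stoppedSum B g ω ∂P
      = ∑' n, ∫⁻ ω, (avoidingPaths B n).indicator
          (fun p => g (p (Fin.last n), ω (n + 1))) (fun i => ω i) ∂P := by
        simp_rw [stoppedSum_eq_tsum_indicator]
        exact lintegral_tsum fun n => ((measurable_indicator_avoidingPaths_edge hB hg n).comp
          ((measurable_prefix n).prodMk (measurable_pi_apply _))).aemeasurable
    _ = ∑' n, ∫⁻ x, ∫⁻ y, g (x, y) ∂ℓ x ∂killedOccupation B (Φ.fst.restrict A) ℓ n := by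
        simp_rw [hP.lintegral_indicator_avoidingPaths_edge hB hg]
    _ = ∫⁻ x, ∫⁻ y, g (x, y) ∂ℓ x ∂Measure.sum (killedOccupation B (Φ.fst.restrict A) ℓ) :=
        (lintegral_sum_measure _ _).symm
    _ ≤ ∫⁻ x, ∫⁻ y, g (x, y) ∂ℓ x ∂Φ.fst :=
        lintegral_mono' (sum_killedOccupation_le hA hB hflow) le_rfl
    _ = ∫⁻ p, g p ∂Φ := (hdis g hg).symm

/-- **Flow domination (Proposition: flow dominates the expected edge occupation).** -/
theorem unitFlow_dominates_edge_occupation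
    {Ω : Type*} [MeasurableSpace Ω] [TopologicalSpace Ω] [PolishSpace Ω] [BorelSpace Ω]
    (A B : Set Ω) (hA : MeasurableSet A) (hB : MeasurableSet B) (hAB : Disjoint A B)
    (Φ : Measure (Ω × Ω)) (hΦ : IsUnitFlow A B Φ)
    (ℓ : Kernel Ω Ω) (hℓ : IsMarkovKernel ℓ) (hdis : Disintegrates Φ ℓ)
    (P : Measure (ℕ → Ω)) (hP : IsChainLaw (Φ.fst.restrict A) ℓ P)
    (g : Ω × Ω → ℝ≥0∞) (hg : Measurable g)
    (M : ℝ≥0∞) (hM : M < ⊤) (hgM : ∀ p, g p ≤ M) :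
    ∫⁻ ω, stoppedSum B g ω ∂P ≤ ∫⁻ p, g p ∂Φ :=
  unitFlow_dominates_edge_occupation_general A B hA hB Φ hΦ ℓ hℓ hdis P hP g hg
end

section
/- Let Φ be a unit flow from A to B with left marginal ν and associated Markov chain Y. Then for every n≥0 the sub-probability measure ν_n(C) = P^Φ(Y_n ∈ C, τ_B^Y ≥ n+1) is absolutely continuous with respect to ν. Consequently, the law of the chain Y stopped upon reaching B does not depend on the choice of the disintegrating kernel ℓ (any two kernels with Φ(dx,dy)=ν(dx)ℓ(x,dy) yield the same law of the stopped chain). -/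
open MeasureTheory ProbabilityTheory ENNReal Set Filter
open scoped Classical

/-- The path `ω` stopped upon reaching `B` (at the first time `n ≥ 1` with `ω n ∈ B`). -/
noncomputable def stoppedPath {Ω : Type*} (B : Set Ω) (ω : ℕ → Ω) (k : ℕ) : Ω :=
  if h : ∃ m, 1 ≤ m ∧ m ≤ k ∧ ω m ∈ B then ω (Nat.find h) else ω k

/-!
Write `ν = Φ.fst`. Conservation of the flow off `A ∪ B`, together with `Φ (Ω × A) = 0`, shows
that the right marginal of `Φ` charges no `ν`-null subset of `Bᶜ`; as `Φ = ν ⊗ ℓ`, this means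
`ℓ x (C \ B) = 0` for `ν`-a.e. `x` whenever `ν C = 0`. Since the chain starts from `ν|_A ≪ ν`,
induction on `n` gives `ν_n ≪ ν`.

Both `ν ⊗ ℓ` and `ν ⊗ ℓ'` equal `Φ`, so `ℓ = ℓ'` holds `ν`-a.e. (`Ω` is countably generated and
`ν` is σ-finite because `Φ` is). The finite-dimensional laws of the stopped chain obey a
recursion in which the kernel is only evaluated at the current position of a path that has not
yet hit `B`; by the first part the law of that position is absolutely continuous w.r.t. `ν`, so
the recursions for `ℓ` and `ℓ'` coincide.
-/

namespace MeasureTheory.Measure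

variable {α β : Type*} [MeasurableSpace α] [MeasurableSpace β]

lemma compProd_restrict_left {μ : Measure α} [SFinite μ] {κ : Kernel α β} [IsSFiniteKernel κ]
    {S : Set α} (hS : MeasurableSet S) :
    (μ.restrict S) ⊗ₘ κ = (μ ⊗ₘ κ).restrict (S ×ˢ univ) := by
  ext s hs
  rw [restrict_apply hs, compProd_apply hs, compProd_apply (hs.inter (hS.prod .univ)),
    ← lintegral_indicator hS]
  refine lintegral_congr fun x => ?_
  by_cases hx : x ∈ S <;> simp [hx, Set.preimage]

end MeasureTheory.Measure

namespace ProbabilityTheory.Kernel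

variable {α β : Type*} [MeasurableSpace α] [MeasurableSpace β]
  [MeasurableSpace.CountableOrCountablyGenerated α β]

lemma ae_eq_of_compProd_eq_of_sigmaFinite {μ : Measure α} [SigmaFinite μ] {κ η : Kernel α β}
    [IsFiniteKernel κ] [IsFiniteKernel η] (h : μ ⊗ₘ κ = μ ⊗ₘ η) : κ =ᵐ[μ] η := by
  rw [Filter.EventuallyEq, ← Measure.restrict_univ (μ := μ), ← iUnion_spanningSets μ,
    ae_restrict_iUnion_iff]
  intro n
  have : IsFiniteMeasure (μ.restrict (spanningSets μ n)) :=
    isFiniteMeasure_restrict.mpr (measure_spanningSets_lt_top μ n).ne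
  refine ae_eq_of_compProd_eq ?_
  rw [Measure.compProd_restrict_left (measurableSet_spanningSets μ n),
    Measure.compProd_restrict_left (measurableSet_spanningSets μ n), h]

end ProbabilityTheory.Kernel

section Flow

variable {Ω : Type*} [MeasurableSpace Ω] {Φ : Measure (Ω × Ω)} {ℓ ℓ' : Kernel Ω Ω}

lemma Disintegrates.eq_compProd [SFinite Φ.fst] [IsSFiniteKernel ℓ] (hdis : Disintegrates Φ ℓ) :
    Φ = Φ.fst ⊗ₘ ℓ := by
  ext s hs
  rw [Measure.compProd_apply hs, ← lintegral_indicator_one hs, hdis _ (measurable_one.indicator hs)]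
  exact lintegral_congr fun x => lintegral_indicator_one (measurable_prodMk_left hs)

lemma Disintegrates.sigmaFinite_fst [SigmaFinite Φ] [IsMarkovKernel ℓ]
    (hdis : Disintegrates Φ ℓ) : SigmaFinite Φ.fst := by
  obtain ⟨h, hpos, hmeas, hint⟩ := exists_pos_lintegral_lt_of_sigmaFinite Φ one_ne_zero
  set H : Ω → ℝ≥0∞ := fun x => ∫⁻ y, h (x, y) ∂ℓ x
  have hHm : Measurable H := (measurable_coe_nnreal_ennreal.comp hmeas).lintegral_kernel_prod_right'
  have hHint : ∫⁻ x, H x ∂Φ.fst ≠ ∞ :=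
    (hdis _ (measurable_coe_nnreal_ennreal.comp hmeas) ▸ hint.trans ENNReal.one_lt_top).ne
  have hHpos (x : Ω) : H x ≠ 0 := fun h0 => by
    obtain ⟨y, hy⟩ := ((lintegral_eq_zero_iff (by fun_prop)).mp h0).exists
    exact (hpos (x, y)).ne' (by simpa using hy)
  -- `H` is positive and `ν`-integrable, and `ν = (ν.withDensity H).withDensity H⁻¹`.
  have : IsFiniteMeasure (Φ.fst.withDensity H) := isFiniteMeasure_withDensity hHint
  rw [← withDensity_inv_same hHm (.of_forall hHpos) ((ae_lt_top hHm hHint).mono fun _ => ne_of_lt)]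
  exact SigmaFinite.withDensity_of_ne_top' fun x => ENNReal.inv_ne_top.mpr (hHpos x)

lemma Disintegrates.ae_eq [MeasurableSpace.CountablyGenerated Ω] [SigmaFinite Φ.fst]
    [IsFiniteKernel ℓ] [IsFiniteKernel ℓ'] (hdis : Disintegrates Φ ℓ)
    (hdis' : Disintegrates Φ ℓ') : ℓ =ᵐ[Φ.fst] ℓ' :=
  Kernel.ae_eq_of_compProd_eq_of_sigmaFinite (hdis.eq_compProd.symm.trans hdis'.eq_compProd)

lemma IsUnitFlow.measure_univ_prod_diff_eq_zero {A B C : Set Ω} (hΦ : IsUnitFlow A B Φ)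
    (hA : MeasurableSet A) (hB : MeasurableSet B) (hC : MeasurableSet C) (hν : Φ.fst C = 0) :
    Φ (univ ×ˢ (C \ B)) = 0 := by
  obtain ⟨-, -, hA0, -, -, hbal, -⟩ := hΦ
  have hCAB : MeasurableSet (C \ (A ∪ B)) := hC.diff (hA.union hB)
  have hmid : Φ (univ ×ˢ (C \ (A ∪ B))) = 0 := by
    rw [← hbal _ hCAB fun x hx => hx.2, prod_univ, ← Measure.fst_apply hCAB]
    exact measure_mono_null sdiff_subset hν
  refine measure_mono_null ?_ (measure_union_null hA0 hmid)
  rintro ⟨x, y⟩ ⟨-, hyC, hyB⟩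
  by_cases hyA : y ∈ A
  · exact .inl ⟨trivial, hyA⟩
  · exact .inr ⟨trivial, hyC, by rintro (h | h) <;> contradiction⟩

lemma Disintegrates.ae_apply_diff_eq_zero [SFinite Φ.fst] [IsSFiniteKernel ℓ] {A B C : Set Ω}
    (hdis : Disintegrates Φ ℓ) (hΦ : IsUnitFlow A B Φ) (hA : MeasurableSet A)
    (hB : MeasurableSet B) (hC : MeasurableSet C) (hν : Φ.fst C = 0) :
    ∀ᵐ x ∂Φ.fst, ℓ x (C \ B) = 0 := by
  have h := hΦ.measure_univ_prod_diff_eq_zero hA hB hC hν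
  rwa [hdis.eq_compProd, Measure.compProd_apply_prod .univ (hC.diff hB), setLIntegral_univ,
    lintegral_eq_zero_iff (Kernel.measurable_coe ℓ (hC.diff hB))] at h

end Flow

namespace StoppedChain

variable {Ω : Type*} {B : Set Ω}

abbrev HitsBy (B : Set Ω) (ω : ℕ → Ω) (k : ℕ) : Prop := ∃ m, 1 ≤ m ∧ m ≤ k ∧ ω m ∈ B

lemma find_hitsBy_congr {ω : ℕ → Ω} {k k' : ℕ} (h : HitsBy B ω k) (h' : HitsBy B ω k')
    (hk : Nat.find h ≤ k') : Nat.find h = Nat.find h' := by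
  refine Nat.find_congr (Nat.find_spec h) fun n hn => ?_
  have := (Nat.find_spec h).2.1
  constructor <;> rintro ⟨h1, h2, h3⟩ <;> exact ⟨h1, by omega, h3⟩

lemma stoppedPath_zero (ω : ℕ → Ω) : stoppedPath B ω 0 = ω 0 :=
  dif_neg fun ⟨_, h1, h2, _⟩ => by omega

lemma stoppedPath_congr {ω ω' : ℕ → Ω} {k : ℕ} (h : ∀ m ≤ k, ω m = ω' m) :
    stoppedPath B ω k = stoppedPath B ω' k := by
  have hp : ∀ m, (1 ≤ m ∧ m ≤ k ∧ ω m ∈ B) ↔ (1 ≤ m ∧ m ≤ k ∧ ω' m ∈ B) :=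
    fun m => and_congr_right fun _ => and_congr_right fun hm => by rw [h m hm]
  unfold stoppedPath
  split_ifs with h₁ h₂ h₂
  · rw [Nat.find_congr' (hq := h₂) (hp _), h _ (Nat.find_spec h₂).2.1]
  · exact absurd ((exists_congr hp).mp h₁) h₂
  · exact absurd ((exists_congr hp).mpr h₂) h₁
  · exact h k le_rfl

lemma stoppedPath_succ (ω : ℕ → Ω) (k : ℕ) :
    stoppedPath B ω (k + 1) = if HitsBy B ω k then stoppedPath B ω k else ω (k + 1) := by
  unfold stoppedPath
  split_ifs with hk' hk hk
  · rw [find_hitsBy_congr hk hk' ((Nat.find_spec hk).2.1.trans k.le_succ)]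
  · obtain ⟨h1, h2, h3⟩ := Nat.find_spec hk'
    rw [show Nat.find hk' = k + 1 by
      by_contra hne; exact hk ⟨_, h1, by omega, h3⟩]
  · exact absurd (let ⟨m, h1, h2, h3⟩ := hk; ⟨m, h1, by omega, h3⟩) hk'
  · rfl

lemma stoppedPath_of_not_hitsBy {ω : ℕ → Ω} {k m : ℕ} (h : ¬ HitsBy B ω k) (hm : m ≤ k + 1) :
    stoppedPath B ω m = ω m := by
  rcases Nat.lt_or_ge m (k + 1) with hlt | hge
  · exact dif_neg fun ⟨j, h1, h2, h3⟩ => h ⟨j, h1, by omega, h3⟩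
  · obtain rfl : m = k + 1 := by omega
    rw [stoppedPath_succ, if_neg h]

lemma hitsBy_stoppedPath {ω : ℕ → Ω} {k : ℕ} (h : HitsBy B ω k) :
    HitsBy B (stoppedPath B ω) k := by
  obtain ⟨h1, h2, h3⟩ := Nat.find_spec h
  have h' : HitsBy B ω (Nat.find h) := ⟨_, h1, le_rfl, h3⟩
  refine ⟨Nat.find h, h1, h2, ?_⟩
  rwa [stoppedPath, dif_pos h', ← find_hitsBy_congr h h' le_rfl]

lemma hitsBy_congr {ω ω' : ℕ → Ω} {k : ℕ} (h : ∀ m ≤ k, ω m = ω' m) :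
    HitsBy B ω k ↔ HitsBy B ω' k :=
  exists_congr fun m => and_congr_right fun _ => and_congr_right fun hm => by rw [h m hm]

def truncate (N : ℕ) (ω : ℕ → Ω) : Fin (N + 1) → Ω := fun i => ω i

def extendConst (N : ℕ) (p : Fin (N + 1) → Ω) : ℕ → Ω := fun m => p ⟨min m N, by omega⟩

noncomputable def stopFin (B : Set Ω) (N : ℕ) (p : Fin (N + 1) → Ω) : Fin (N + 1) → Ω :=
  truncate N (stoppedPath B (extendConst N p))

def Survives (B : Set Ω) (N : ℕ) (p : Fin (N + 1) → Ω) : Prop :=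
  ∀ i : Fin (N + 1), 1 ≤ (i : ℕ) → p i ∉ B

def aliveSet (B C : Set Ω) (N : ℕ) : Set (Fin (N + 1) → Ω) :=
  {p | p (Fin.last N) ∈ C ∧ Survives B N p}

variable {N : ℕ}

lemma snoc_mem_aliveSet_iff {C : Set Ω} {p : Fin (N + 1) → Ω} {y : Ω} :
    Fin.snoc p y ∈ aliveSet B C (N + 1) ↔ y ∈ C \ B ∧ Survives B N p := by
  simp only [aliveSet, Survives, Set.mem_ofPred_eq, Fin.forall_fin_succ', Fin.snoc_castSucc,
    Fin.snoc_last, Fin.val_castSucc, Fin.val_last, Set.mem_sdiff]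
  grind

lemma extendConst_apply (p : Fin (N + 1) → Ω) (i : Fin (N + 1)) :
    extendConst N p i = p i := by
  simp only [extendConst, min_eq_left (Nat.le_of_lt_succ i.isLt)]

lemma extendConst_truncate (ω : ℕ → Ω) {m : ℕ} (hm : m ≤ N) :
    extendConst N (truncate N ω) m = ω m := by
  simp [extendConst, truncate, min_eq_left hm]

lemma extendConst_snoc_of_le (p : Fin (N + 1) → Ω) (y : Ω) {m : ℕ} (hm : m ≤ N) :
    extendConst (N + 1) (Fin.snoc p y) m = extendConst N p m := by
  simp only [extendConst, min_eq_left hm, min_eq_left (hm.trans N.le_succ)]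
  exact Fin.snoc_castSucc (α := fun _ => Ω) (i := ⟨m, by omega⟩) ..

lemma survives_iff_not_hitsBy {p : Fin (N + 1) → Ω} :
    Survives B N p ↔ ¬ HitsBy B (extendConst N p) N := by
  refine ⟨fun h ⟨m, h1, h2, h3⟩ => ?_, fun h i hi hiB => h ⟨i, hi, Nat.le_of_lt_succ i.isLt, ?_⟩⟩
  · rw [show m = ((⟨m, by omega⟩ : Fin (N + 1)) : ℕ) from rfl, extendConst_apply] at h3
    exact h _ h1 h3
  · rwa [extendConst_apply]

lemma truncate_stoppedPath (ω : ℕ → Ω) :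
    truncate N (stoppedPath B ω) = stopFin B N (truncate N ω) :=
  funext fun i => stoppedPath_congr fun _ hm =>
    (extendConst_truncate ω (hm.trans (Nat.le_of_lt_succ i.isLt))).symm

lemma stopFin_of_survives {p : Fin (N + 1) → Ω} (h : Survives B N p) : stopFin B N p = p :=
  funext fun i => by
    rw [stopFin, truncate, stoppedPath_of_not_hitsBy (survives_iff_not_hitsBy.mp h)
      (by omega), extendConst_apply]

lemma survives_of_survives_stopFin {p : Fin (N + 1) → Ω} (h : Survives B N (stopFin B N p)) :
    Survives B N p := by
  rw [survives_iff_not_hitsBy] at h ⊢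
  refine fun hp => h ((hitsBy_congr fun m hm => ?_).mpr (hitsBy_stoppedPath hp))
  exact extendConst_truncate _ hm

lemma truncate_preimage_aliveSet (C : Set Ω) :
    truncate N ⁻¹' aliveSet B C N = {ω | ω N ∈ C ∧ ∀ m, 1 ≤ m → m ≤ N → ω m ∉ B} := by
  ext ω
  simp only [aliveSet, Survives, truncate, Set.mem_preimage, Set.mem_ofPred_eq, Fin.val_last]
  exact and_congr_right fun _ =>
    ⟨fun h m h1 h2 => h ⟨m, by omega⟩ h1, fun h i hi => h i hi (Nat.le_of_lt_succ i.isLt)⟩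

lemma stopFin_preimage_aliveSet (C : Set Ω) : stopFin B N ⁻¹' aliveSet B C N = aliveSet B C N := by
  ext q
  refine ⟨fun hq => ?_, fun hq => ?_⟩
  · rwa [Set.mem_preimage, stopFin_of_survives (survives_of_survives_stopFin hq.2)] at hq
  · rwa [Set.mem_preimage, stopFin_of_survives hq.2]

lemma stopFin_snoc_of_survives {p : Fin (N + 1) → Ω} (h : Survives B N p) (y : Ω) :
    stopFin B (N + 1) (Fin.snoc p y) = Fin.snoc p y := by
  have hnot : ¬ HitsBy B (extendConst (N + 1) (Fin.snoc p y)) N := by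
    rw [hitsBy_congr fun m hm => extendConst_snoc_of_le p y hm]
    exact survives_iff_not_hitsBy.mp h
  funext i
  rw [stopFin, truncate, stoppedPath_of_not_hitsBy hnot (by omega), extendConst_apply]

lemma stopFin_snoc_of_not_survives {p : Fin (N + 1) → Ω} (h : ¬ Survives B N p) (y : Ω) :
    stopFin B (N + 1) (Fin.snoc p y) = Fin.snoc (stopFin B N p) (stopFin B N p (Fin.last N)) := by
  have hagree : ∀ m ≤ N, extendConst (N + 1) (Fin.snoc p y) m = extendConst N p m :=
    fun m hm => extendConst_snoc_of_le p y hm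
  funext i
  induction i using Fin.lastCases with
  | last =>
    have hhit : HitsBy B (extendConst (N + 1) (Fin.snoc p y)) N := by
      rw [hitsBy_congr hagree]; exact not_not.mp (mt survives_iff_not_hitsBy.mpr h)
    simp only [stopFin, truncate, Fin.snoc_last, Fin.val_last, stoppedPath_succ, if_pos hhit]
    exact stoppedPath_congr hagree
  | cast i =>
    simp only [stopFin, truncate, Fin.snoc_castSucc, Fin.val_castSucc]
    exact stoppedPath_congr fun m hm => hagree m (hm.trans (Nat.le_of_lt_succ i.isLt))

section Measurability

variable [MeasurableSpace Ω]

lemma measurable_truncate (N : ℕ) : Measurable (truncate N : (ℕ → Ω) → Fin (N + 1) → Ω) := by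
  unfold truncate; fun_prop

lemma measurable_extendConst (N : ℕ) :
    Measurable (extendConst N : (Fin (N + 1) → Ω) → ℕ → Ω) := by
  unfold extendConst; fun_prop

lemma measurable_snoc (N : ℕ) :
    Measurable fun q : (Fin (N + 1) → Ω) × Ω => (Fin.snoc q.1 q.2 : Fin (N + 2) → Ω) := by
  refine measurable_pi_lambda _ fun i => ?_
  induction i using Fin.lastCases with
  | last => simpa only [Fin.snoc_last] using measurable_snd
  | cast i => simp only [Fin.snoc_castSucc]; fun_prop

lemma measurableSet_hitsBy (hB : MeasurableSet B) (k : ℕ) :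
    MeasurableSet {ω : ℕ → Ω | HitsBy B ω k} := by
  simp only [HitsBy, Set.ofPred_exists, Set.ofPred_and]
  measurability

lemma measurable_stoppedPath_apply (hB : MeasurableSet B) (k : ℕ) :
    Measurable fun ω : ℕ → Ω => stoppedPath B ω k := by
  induction k with
  | zero =>
    simpa only [stoppedPath_zero] using measurable_pi_apply 0
  | succ k ih =>
    simp only [stoppedPath_succ]
    exact Measurable.ite (measurableSet_hitsBy hB k) ih (measurable_pi_apply _)

lemma measurable_stoppedPath (hB : MeasurableSet B) :
    Measurable (stoppedPath B : (ℕ → Ω) → ℕ → Ω) :=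
  measurable_pi_lambda _ (measurable_stoppedPath_apply hB)

lemma measurable_stopFin (hB : MeasurableSet B) (N : ℕ) :
    Measurable (stopFin B N : (Fin (N + 1) → Ω) → Fin (N + 1) → Ω) :=
  (measurable_truncate N).comp ((measurable_stoppedPath hB).comp (measurable_extendConst N))

lemma measurableSet_survives (hB : MeasurableSet B) (N : ℕ) :
    MeasurableSet {p : Fin (N + 1) → Ω | Survives B N p} := by
  simp only [Survives]
  measurability

lemma measurableSet_aliveSet (hB : MeasurableSet B) {C : Set Ω} (hC : MeasurableSet C) (N : ℕ) :
    MeasurableSet (aliveSet B C N) :=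
  (measurable_pi_apply _ hC).inter (measurableSet_survives hB N)

end Measurability

section ChainLaw

variable [MeasurableSpace Ω] {N : ℕ}

lemma measurable_kernel_snoc_preimage (κ : Kernel Ω Ω) [IsSFiniteKernel κ]
    {s : Set (Fin (N + 2) → Ω)} (hs : MeasurableSet s) :
    Measurable fun p : Fin (N + 1) → Ω => κ (p (Fin.last N)) {y | Fin.snoc p y ∈ s} :=
  Kernel.measurable_kernel_prodMk_left (κ := κ.comap _ (measurable_pi_apply (Fin.last N)))
    (measurable_snoc N hs)

lemma fdd_succ_apply (μ0 : Measure Ω) (κ : Kernel Ω Ω) [IsSFiniteKernel κ]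
    {s : Set (Fin (N + 2) → Ω)} (hs : MeasurableSet s) :
    fdd μ0 κ (N + 1) s = ∫⁻ p, κ (p (Fin.last N)) {y | Fin.snoc p y ∈ s} ∂(fdd μ0 κ N) := by
  have hmap (p : Fin (N + 1) → Ω) {t : Set (Fin (N + 2) → Ω)} (ht : MeasurableSet t) :
      (κ (p (Fin.last N))).map (Fin.snoc p) t = κ (p (Fin.last N)) {y | Fin.snoc p y ∈ t} :=
    Measure.map_apply ((measurable_snoc N).comp measurable_prodMk_left) ht
  have hstep : Measurable fun p : Fin (N + 1) → Ω =>
      (κ (p (Fin.last N))).map (Fin.snoc (α := fun _ => Ω) p) := by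
    refine Measure.measurable_measure.mpr fun t ht => ?_
    simpa only [hmap _ ht] using measurable_kernel_snoc_preimage κ ht
  rw [fdd, Measure.bind_apply hs hstep.aemeasurable]
  simp only [hmap _ hs]

lemma fdd_aliveSet_eq_zero {μ0 ν : Measure Ω} {κ : Kernel Ω Ω} [IsSFiniteKernel κ]
    (hB : MeasurableSet B) (h0 : μ0 ≪ ν)
    (hκ : ∀ C, MeasurableSet C → ν C = 0 → ∀ᵐ x ∂ν, κ x (C \ B) = 0)
    (N : ℕ) {C : Set Ω} (hC : MeasurableSet C) (hνC : ν C = 0) :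
    fdd μ0 κ N (aliveSet B C N) = 0 := by
  induction N generalizing C with
  | zero =>
    rw [fdd, Measure.map_apply (by fun_prop) (measurableSet_aliveSet hB hC 0)]
    exact h0 (measure_mono_null (fun x hx => hx.1) hνC)
  | succ N ih =>
    set D := toMeasurable ν {x | κ x (C \ B) ≠ 0}
    have hD : ∀ x ∉ D, κ x (C \ B) = 0 := fun x hx =>
      not_not.mp fun h => hx (subset_toMeasurable _ _ h)
    rw [fdd_succ_apply _ _ (measurableSet_aliveSet hB hC _)]
    refine (lintegral_congr_ae ?_).trans lintegral_zero
    rw [Filter.EventuallyEq, ae_iff]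
    refine measure_mono_null (fun p hp => ?_) (ih (measurableSet_toMeasurable _ _)
      ((measure_toMeasurable _).trans (hκ C hC hνC)))
    have hsub : {y | Fin.snoc p y ∈ aliveSet B C (N + 1)} ⊆ C \ B :=
      fun y hy => (snoc_mem_aliveSet_iff.mp hy).1
    refine ⟨by_contra fun hpD => hp (measure_mono_null hsub (hD _ hpD)), by_contra fun hS => ?_⟩
    exact hp (measure_mono_null (fun y hy => hS (snoc_mem_aliveSet_iff.mp hy).2) measure_empty)

/-- The probability that the stopped chain, having followed `q` so far, moves into `s`: a path
that has already hit `B` just repeats its last position. -/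
noncomputable def stoppedStep (B : Set Ω) (κ : Kernel Ω Ω) (s : Set (Fin (N + 2) → Ω))
    (q : Fin (N + 1) → Ω) : ℝ≥0∞ :=
  if Survives B N q then κ (q (Fin.last N)) {y | Fin.snoc q y ∈ s}
  else s.indicator 1 (Fin.snoc q (q (Fin.last N)) : Fin (N + 2) → Ω)

lemma measurable_stoppedStep (κ : Kernel Ω Ω) [IsSFiniteKernel κ] (hB : MeasurableSet B)
    {s : Set (Fin (N + 2) → Ω)} (hs : MeasurableSet s) : Measurable (stoppedStep B κ s) :=
  Measurable.ite (measurableSet_survives hB N) (measurable_kernel_snoc_preimage κ hs)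
    ((measurable_one.indicator hs).comp
      ((measurable_snoc N).comp (measurable_id.prodMk (measurable_pi_apply _))))

lemma kernel_stopFin_snoc_preimage (κ : Kernel Ω Ω) [IsMarkovKernel κ]
    (s : Set (Fin (N + 2) → Ω)) (p : Fin (N + 1) → Ω) :
    κ (p (Fin.last N)) {y | stopFin B (N + 1) (Fin.snoc p y) ∈ s}
      = stoppedStep B κ s (stopFin B N p) := by
  by_cases h : Survives B N p
  · simp only [stoppedStep, stopFin_of_survives h, if_pos h, stopFin_snoc_of_survives h]
  · simp only [stoppedStep, if_neg (mt survives_of_survives_stopFin h),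
      stopFin_snoc_of_not_survives h]
    by_cases hs : (Fin.snoc (stopFin B N p) (stopFin B N p (Fin.last N)) : Fin (N + 2) → Ω) ∈ s
      <;> simp [hs]

lemma map_stopFin_fdd_succ_apply {μ0 : Measure Ω} (κ : Kernel Ω Ω) [IsMarkovKernel κ]
    (hB : MeasurableSet B) {s : Set (Fin (N + 2) → Ω)} (hs : MeasurableSet s) :
    (fdd μ0 κ (N + 1)).map (stopFin B (N + 1)) s
      = ∫⁻ q, stoppedStep B κ s q ∂((fdd μ0 κ N).map (stopFin B N)) := by
  rw [Measure.map_apply (measurable_stopFin hB _) hs,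
    fdd_succ_apply _ _ (measurable_stopFin hB _ hs),
    lintegral_map (measurable_stoppedStep κ hB hs) (measurable_stopFin hB N)]
  exact lintegral_congr fun p => kernel_stopFin_snoc_preimage κ s p

lemma map_stopFin_fdd_eq_of_ae_eq {μ0 ν : Measure Ω} {κ κ' : Kernel Ω Ω} [IsMarkovKernel κ]
    [IsMarkovKernel κ'] (hB : MeasurableSet B) (hκ : κ =ᵐ[ν] κ')
    (hnull : ∀ N C, MeasurableSet C → ν C = 0 → fdd μ0 κ' N (aliveSet B C N) = 0) (N : ℕ) :
    (fdd μ0 κ N).map (stopFin B N) = (fdd μ0 κ' N).map (stopFin B N) := by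
  induction N with
  | zero => rfl
  | succ N ih =>
    ext s hs
    rw [map_stopFin_fdd_succ_apply κ hB hs, map_stopFin_fdd_succ_apply κ' hB hs, ih]
    set D := toMeasurable ν {x | κ x ≠ κ' x}
    have hDm : MeasurableSet D := measurableSet_toMeasurable _ _
    have hnullD : (fdd μ0 κ' N).map (stopFin B N) (aliveSet B D N) = 0 := by
      rw [Measure.map_apply (measurable_stopFin hB N) (measurableSet_aliveSet hB hDm N),
        stopFin_preimage_aliveSet]
      exact hnull N D hDm ((measure_toMeasurable _).trans (ae_iff.mp hκ))
    -- The two integrands can only differ on surviving paths whose last position lies in `D`.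
    refine lintegral_congr_ae (ae_iff.mpr (measure_mono_null (fun q hq => ?_) hnullD))
    refine ⟨by_contra fun hqD => hq ?_, by_contra fun hS => hq ?_⟩
    · simp only [stoppedStep]
      rw [not_not.mp fun h => hqD (subset_toMeasurable _ _ h)]
    · simp only [stoppedStep, if_neg hS]

lemma ext_of_map_truncate {μ ν : Measure (ℕ → Ω)} [IsFiniteMeasure μ]
    (h : ∀ N, μ.map (truncate N) = ν.map (truncate N)) : μ = ν := by
  have hcyl {t : Set (ℕ → Ω)} (ht : t ∈ measurableCylinders fun _ => Ω) :
      ∃ N, ∃ T, MeasurableSet T ∧ t = truncate N ⁻¹' T := by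
    obtain ⟨s, S, hS, rfl⟩ := (mem_measurableCylinders t).mp ht
    let r (q : Fin (s.sup id + 1) → Ω) (i : s) : Ω :=
      q ⟨i, Nat.lt_succ_of_le (Finset.le_sup (f := id) i.2)⟩
    exact ⟨s.sup id, r ⁻¹' S, (by fun_prop : Measurable r) hS, rfl⟩
  have hmeas {N : ℕ} {T : Set (Fin (N + 1) → Ω)} (hT : MeasurableSet T) :
      μ (truncate N ⁻¹' T) = ν (truncate N ⁻¹' T) := by
    rw [← Measure.map_apply (measurable_truncate N) hT, h,
      Measure.map_apply (measurable_truncate N) hT]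
  refine ext_of_generate_finite _ generateFrom_measurableCylinders.symm
    isPiSystem_measurableCylinders (fun t ht => ?_) (hmeas (N := 0) MeasurableSet.univ)
  obtain ⟨N, T, hT, rfl⟩ := hcyl ht
  exact hmeas hT

end ChainLaw
end StoppedChain

section ChainLaw

open StoppedChain

variable {Ω : Type*} [MeasurableSpace Ω] {μ0 : Measure Ω} {κ : Kernel Ω Ω} {P : Measure (ℕ → Ω)}

lemma IsChainLaw.map_truncate (hP : IsChainLaw μ0 κ P) (N : ℕ) :
    P.map (truncate N) = fdd μ0 κ N :=
  hP.2 N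

lemma IsChainLaw.map_stoppedPath_map_truncate {B : Set Ω} (hB : MeasurableSet B)
    (hP : IsChainLaw μ0 κ P) (N : ℕ) :
    (P.map (stoppedPath B)).map (truncate N) = (fdd μ0 κ N).map (stopFin B N) := by
  rw [Measure.map_map (measurable_truncate N) (measurable_stoppedPath hB),
    ← hP.map_truncate N, Measure.map_map (measurable_stopFin hB N) (measurable_truncate N)]
  exact congrArg (fun f => P.map f) (funext fun ω => truncate_stoppedPath ω)

end ChainLaw

open StoppedChain in
theorem chain_law_independent_of_kernel_general
    {Ω : Type*} [MeasurableSpace Ω] [TopologicalSpace Ω] [PolishSpace Ω] [BorelSpace Ω]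
    (A B : Set Ω) (hA : MeasurableSet A) (hB : MeasurableSet B)
    (Φ : Measure (Ω × Ω)) (hΦ : IsUnitFlow A B Φ)
    (ℓ : Kernel Ω Ω) (hℓ : IsMarkovKernel ℓ) (hdis : Disintegrates Φ ℓ)
    (P : Measure (ℕ → Ω)) (hP : IsChainLaw (Φ.fst.restrict A) ℓ P) :
    (∀ n : ℕ, ∀ C : Set Ω, MeasurableSet C → Φ.fst C = 0 →
      P {ω | ω n ∈ C ∧ ∀ m, 1 ≤ m → m ≤ n → ω m ∉ B} = 0) ∧
    (∀ (ℓ' : Kernel Ω Ω) (P' : Measure (ℕ → Ω)), IsMarkovKernel ℓ' →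
      Disintegrates Φ ℓ' → IsChainLaw (Φ.fst.restrict A) ℓ' P' →
      P.map (stoppedPath B) = P'.map (stoppedPath B)) := by
  have := hP.1
  have : SigmaFinite Φ := hΦ.1
  have : SigmaFinite Φ.fst := hdis.sigmaFinite_fst
  have hnull (κ : Kernel Ω Ω) [IsMarkovKernel κ] (hκ : Disintegrates Φ κ) (N : ℕ) (C : Set Ω)
      (hC : MeasurableSet C) (hνC : Φ.fst C = 0) :
      fdd (Φ.fst.restrict A) κ N (aliveSet B C N) = 0 :=
    fdd_aliveSet_eq_zero hB Measure.restrict_le_self.absolutelyContinuous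
      (fun _ hC' hνC' => hκ.ae_apply_diff_eq_zero hΦ hA hB hC' hνC') N hC hνC
  refine ⟨fun N C hC hνC => ?_, fun ℓ' P' hℓ' hdis' hP' => ?_⟩
  · rw [← truncate_preimage_aliveSet,
      ← Measure.map_apply (measurable_truncate N) (measurableSet_aliveSet hB hC N),
      hP.map_truncate N]
    exact hnull ℓ hdis N C hC hνC
  · refine ext_of_map_truncate fun N => ?_
    rw [hP.map_stoppedPath_map_truncate hB, hP'.map_stoppedPath_map_truncate hB]
    exact map_stopFin_fdd_eq_of_ae_eq hB (hdis.ae_eq hdis') (hnull ℓ' hdis') N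

/-- **The sub-probability laws `ν_n` are absolutely continuous w.r.t. `ν`, and the law of the
stopped chain does not depend on the choice of the disintegrating kernel.** -/
theorem chain_law_independent_of_kernel
    {Ω : Type*} [MeasurableSpace Ω] [TopologicalSpace Ω] [PolishSpace Ω] [BorelSpace Ω]
    (A B : Set Ω) (hA : MeasurableSet A) (hB : MeasurableSet B) (hAB : Disjoint A B)
    (Φ : Measure (Ω × Ω)) (hΦ : IsUnitFlow A B Φ)
    (ℓ : Kernel Ω Ω) (hℓ : IsMarkovKernel ℓ) (hdis : Disintegrates Φ ℓ)
    (P : Measure (ℕ → Ω)) (hP : IsChainLaw (Φ.fst.restrict A) ℓ P) :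
    (∀ n : ℕ, ∀ C : Set Ω, MeasurableSet C → Φ.fst C = 0 →
      P {ω | ω n ∈ C ∧ ∀ m, 1 ≤ m → m ≤ n → ω m ∉ B} = 0) ∧
    (∀ (ℓ' : Kernel Ω Ω) (P' : Measure (ℕ → Ω)), IsMarkovKernel ℓ' →
      Disintegrates Φ ℓ' → IsChainLaw (Φ.fst.restrict A) ℓ' P' →
      P.map (stoppedPath B) = P'.map (stoppedPath B)) :=
  chain_law_independent_of_kernel_general A B hA hB Φ hΦ ℓ hℓ hdis P hP
end
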